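/- Let X be a metrizable topological space and let φ be an action of a group G on X. If φ is cocompactly expansive, then φ is metric-independent expansive (MIE), i.e. expansive with respect to every metric compatible with the topology of X. -/
import Mathlib

/-- An action `φ` is expansive with respect to a distance function `d`. -/
def ExpansiveWith {G X : Type*} (φ : G → X → X) (d : X → X → ℝ) : Prop :=
  ∃ c > 0, ∀ x y : X, x ≠ y → ∃ g : G, c < d (φ g x) (φ g y)

/-- Metric-independent expansiveness: expansive with respect to every metric
compatible with the topology. -/
def MIE {G X : Type*} [tX : TopologicalSpace X] (φ : G → X → X) : Prop :=
  ∀ m : MetricSpace X, m.toUniformSpace.toTopologicalSpace = tX →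
    ExpansiveWith φ (fun x y => @dist X m.toDist x y)

/-- Cocompact expansiveness. -/
def CocompactlyExpansive {G X : Type*} [TopologicalSpace X] (φ : G → X → X) : Prop :=
  ∃ (𝒰 : Finset (Set X)) (K : Set X),
    (∀ U ∈ 𝒰, IsOpen U) ∧ (∀ x : X, ∃ U ∈ 𝒰, x ∈ U) ∧
    IsCompact K ∧ (∀ x : X, ∃ g : G, ∃ k ∈ K, x = φ g k) ∧
    (∀ x y : X, (∀ g : G, (∃ U ∈ 𝒰, φ g x ∈ U ∧ φ g y ∈ U) ∨ (φ g x ∉ K ∧ φ g y ∉ K)) →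
      x = y)

/-- If an action of a group `G` on a metrizable topological space `X` is
cocompactly expansive, then it is metric-independent expansive. -/
theorem cocompactlyExpansive_mie {G X : Type*} [Group G] [TopologicalSpace X]
    [TopologicalSpace.MetrizableSpace X]
    (φ : G → X → X) (hone : ∀ x : X, φ 1 x = x)
    (hmul : ∀ (g h : G) (x : X), φ (g * h) x = φ g (φ h x))
    (hce : CocompactlyExpansive φ) : MIE φ := by
  intro m hm
  subst hm
  letI := m
  obtain ⟨𝒰, K, hopen, hcover, hK, -, hexp⟩ := hce
  have hsub : K ⊆ ⋃₀ (𝒰 : Set (Set X)) := fun x _ => by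
    obtain ⟨U, hU, hx⟩ := hcover x
    exact ⟨U, hU, hx⟩
  obtain ⟨δ, hδ, hball⟩ := lebesgue_number_lemma_of_metric_sUnion hK
    (fun U hU => hopen U hU) hsub
  refine ⟨δ / 2, by positivity, fun x y hxy => ?_⟩
  by_contra h
  push_neg at h
  apply hxy
  apply hexp x y
  intro g
  by_cases hx : φ g x ∈ K
  · obtain ⟨U, hU, hsubU⟩ := hball _ hx
    refine Or.inl ⟨U, hU, hsubU (Metric.mem_ball_self hδ), hsubU ?_⟩
    have := h g
    simp only [Metric.mem_ball, dist_comm]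
    linarith
  · by_cases hy : φ g y ∈ K
    · obtain ⟨U, hU, hsubU⟩ := hball _ hy
      refine Or.inl ⟨U, hU, hsubU ?_, hsubU (Metric.mem_ball_self hδ)⟩
      have := h g
      simp only [Metric.mem_ball]
      linarith
    · exact Or.inr ⟨hx, hy⟩
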